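/- The function a(ξ) := √(P(ξ)) − √(P_m(ξ)), defined on ℝⁿ \ {0}, is a symbol of order m/2 − 1 at infinity: for every multi-index α there exist a constant C_α > 0 and R ≥ 1 such that |∂^α a(ξ)| ≤ C_α·|ξ|^{m/2 − 1 − |α|} for all ξ with |ξ| ≥ R. -/

import Mathlib

open MeasureTheory Real Filter Topology
open scoped RealInnerProductSpace

noncomputable section

/-- Evaluation of a multivariate polynomial at a point of Euclidean space. -/
def polyEval {n : ℕ} (p : MvPolynomial (Fin n) ℝ) (ξ : EuclideanSpace ℝ (Fin n)) : ℝ :=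
  MvPolynomial.eval (fun i => ξ i) p

/-!
Write `m = 2h`, `t = ‖ξ‖⁻¹` and `ω = t • ξ`. Rationalizing,
`√P - √Pₘ = (P - Pₘ) / (√P + √Pₘ)`, and homogeneity turns this into `‖ξ‖ ^ (h - 1) * H (t, ω)`
with `H = G / (√F + √Pₘ(ω))`, where `F (t, ω) = t ^ m P (ω / t)` and
`G (t, ω) = t ^ (m - 1) (P - Pₘ) (ω / t)` are polynomials in `(t, ω)`. Since `F (0, ω) = Pₘ (ω)`,
ellipticity and positivity make `H` smooth near the compact set `[0, 1] × S^{n-1}`. The map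
`ξ ↦ (‖ξ‖⁻¹, ξ / ‖ξ‖)` has `k`-th derivatives `O(‖ξ‖ ^ (-k))` by homogeneity, so by Faà di Bruno
`H (t, ω)` is a symbol of order `0`, and the Leibniz rule with the homogeneous factor
`‖ξ‖ ^ (h - 1)` gives order `h - 1 = m / 2 - 1`.
-/

open Set Asymptotics Bornology MvPolynomial
open scoped ContDiff

section Symbol

variable {E F G : Type*} [NormedAddCommGroup E] [NormedSpace ℝ E]
  [NormedAddCommGroup F] [NormedSpace ℝ F] [NormedAddCommGroup G] [NormedSpace ℝ G]

structure IsSymbol (f : E → F) (d : ℝ) : Prop where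
  contDiffOn : ContDiffOn ℝ ∞ f {0}ᶜ
  isBigO (k : ℕ) : iteratedFDeriv ℝ k f =O[cobounded E] fun ξ => ‖ξ‖ ^ (d - k)

def IsPosHomogeneous (f : E → F) (d : ℝ) : Prop :=
  ∀ ⦃c : ℝ⦄, 0 < c → ∀ y, f (c • y) = c ^ d • f y

lemma iteratedFDerivWithin_compl_zero {f : E → F} {ξ : E} (hξ : ξ ≠ 0) (i : ℕ) :
    iteratedFDerivWithin ℝ i f {0}ᶜ ξ = iteratedFDeriv ℝ i f ξ :=
  iteratedFDerivWithin_of_isOpen i isOpen_compl_singleton hξ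

namespace IsSymbol

variable {f : E → F} {d : ℝ}

theorem congr (hf : IsSymbol f d) {g : E → F} (hfg : EqOn f g {0}ᶜ) : IsSymbol g d where
  contDiffOn := hf.contDiffOn.congr fun _ hx => (hfg hx).symm
  isBigO k := by
    refine (hf.isBigO k).congr' ?_ EventuallyEq.rfl
    filter_upwards [eventually_ne_cobounded 0] with ξ hξ
    exact ((hfg.eventuallyEq_of_mem (isOpen_compl_singleton.mem_nhds hξ)).iteratedFDeriv ℝ
      k).eq_of_nhds

theorem mono (hf : IsSymbol f d) {d' : ℝ} (hd : d ≤ d') : IsSymbol f d' where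
  contDiffOn := hf.contDiffOn
  isBigO k := by
    refine (hf.isBigO k).trans (IsBigO.of_bound' ?_)
    filter_upwards [eventually_cobounded_le_norm 1] with ξ hξ
    rw [Real.norm_of_nonneg (by positivity), Real.norm_of_nonneg (by positivity)]
    exact Real.rpow_le_rpow_of_exponent_le hξ (by linarith)

theorem exists_bound (hf : IsSymbol f d) (k : ℕ) :
    ∃ C, 0 < C ∧ ∃ R, 1 ≤ R ∧ ∀ ξ, R ≤ ‖ξ‖ →
      ‖iteratedFDeriv ℝ k f ξ‖ ≤ C * ‖ξ‖ ^ (d - k) := by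
  obtain ⟨C, hC⟩ := (hf.isBigO k).bound
  obtain ⟨R, -, hR⟩ := hasBasis_cobounded_norm.eventually_iff.mp hC
  refine ⟨max C 1, by positivity, max R 1, le_max_right _ _, fun ξ hξ => ?_⟩
  have hpow : 0 ≤ ‖ξ‖ ^ (d - k) := by positivity
  calc ‖iteratedFDeriv ℝ k f ξ‖ ≤ C * ‖ξ‖ ^ (d - k) := by
        simpa only [Real.norm_of_nonneg hpow] using hR ((le_max_left _ _).trans hξ)
    _ ≤ max C 1 * ‖ξ‖ ^ (d - k) := by gcongr; exact le_max_left _ _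

theorem eventually_norm_iteratedFDeriv_le (hf : IsSymbol f d) (n : ℕ) :
    ∃ C, ∀ᶠ ξ in cobounded E, ∀ i ≤ n, ‖iteratedFDeriv ℝ i f ξ‖ ≤ C * ‖ξ‖ ^ (d - i) := by
  induction n with
  | zero =>
    obtain ⟨C, hC⟩ := (hf.isBigO 0).bound
    refine ⟨C, hC.mono fun ξ hξ i hi => ?_⟩
    obtain rfl := Nat.le_zero.mp hi
    rwa [Real.norm_of_nonneg (by positivity)] at hξ
  | succ n ih =>
    obtain ⟨C₁, h₁⟩ := ih
    obtain ⟨C₂, h₂⟩ := (hf.isBigO (n + 1)).bound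
    refine ⟨max C₁ C₂, ?_⟩
    filter_upwards [h₁, h₂] with ξ h₁ h₂ i hi
    have hpow : 0 ≤ ‖ξ‖ ^ (d - i) := by positivity
    rcases Nat.of_le_succ hi with hi | rfl
    · exact (h₁ i hi).trans (by gcongr; exact le_max_left _ _)
    · rw [Real.norm_of_nonneg hpow] at h₂
      exact h₂.trans (by gcongr; exact le_max_right _ _)

theorem prodMk {g : E → G} (hf : IsSymbol f d) (hg : IsSymbol g d) :
    IsSymbol (fun ξ => (f ξ, g ξ)) d where
  contDiffOn := hf.contDiffOn.prodMk hg.contDiffOn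
  isBigO k := by
    refine isBigO_norm_left.mp <|
      ((hf.isBigO k).prod_left (hg.isBigO k)).norm_left.congr' ?_ EventuallyEq.rfl
    filter_upwards [eventually_ne_cobounded 0] with ξ hξ
    have hU := isOpen_compl_singleton.mem_nhds hξ
    rw [iteratedFDeriv_prodMk (hf.contDiffOn.contDiffAt hU) (hg.contDiffOn.contDiffAt hU)
      ENat.LEInfty.out, ContinuousMultilinearMap.opNorm_prod, Prod.norm_def]

theorem mul {A : Type*} [NormedRing A] [NormedAlgebra ℝ A] {f g : E → A} {d₁ d₂ : ℝ}
    (hf : IsSymbol f d₁) (hg : IsSymbol g d₂) : IsSymbol (fun ξ => f ξ * g ξ) (d₁ + d₂) where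
  contDiffOn := hf.contDiffOn.mul hg.contDiffOn
  isBigO k := by
    have hLeibniz : ∀ᶠ ξ in cobounded E, ‖iteratedFDeriv ℝ k (fun ξ => f ξ * g ξ) ξ‖ ≤
        ∑ i ∈ Finset.range (k + 1), (k.choose i : ℝ) * ‖iteratedFDeriv ℝ i f ξ‖ *
          ‖iteratedFDeriv ℝ (k - i) g ξ‖ := by
      filter_upwards [eventually_ne_cobounded 0] with ξ hξ
      simpa only [iteratedFDerivWithin_compl_zero hξ] using
        norm_iteratedFDerivWithin_mul_le hf.contDiffOn hg.contDiffOn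
          isOpen_compl_singleton.uniqueDiffOn hξ ENat.LEInfty.out
    have hterm : ∀ i ∈ Finset.range (k + 1),
        (fun ξ => (k.choose i : ℝ) * ‖iteratedFDeriv ℝ i f ξ‖ *
          ‖iteratedFDeriv ℝ (k - i) g ξ‖) =O[cobounded E] fun ξ => ‖ξ‖ ^ (d₁ + d₂ - k) := by
      intro i hi
      refine (((hf.isBigO i).norm_left.const_mul_left _).mul
        (hg.isBigO (k - i)).norm_left).congr' EventuallyEq.rfl ?_
      filter_upwards [eventually_ne_cobounded 0] with ξ hξ
      rw [← Real.rpow_add (norm_pos_iff.mpr hξ),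
        Nat.cast_sub (Nat.lt_succ_iff.mp (Finset.mem_range.mp hi))]
      ring_nf
    refine (IsBigO.of_bound' ?_).trans (IsBigO.sum hterm)
    filter_upwards [hLeibniz] with ξ hξ
    simpa only [Finset.sum_apply, Real.norm_eq_abs] using hξ.trans (le_abs_self _)


end IsSymbol

lemma IsCompact.exists_bound_iteratedFDerivWithin {g : G → F} {U K : Set G}
    (hg : ContDiffOn ℝ ∞ g U) (hU : IsOpen U) (hK : IsCompact K) (hKU : K ⊆ U) (n : ℕ) :
    ∃ C, ∀ z ∈ K, ∀ i ≤ n, ‖iteratedFDerivWithin ℝ i g U z‖ ≤ C := by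
  have hcont : ContinuousOn
      (fun z => ∑ i ∈ Finset.range (n + 1), ‖iteratedFDerivWithin ℝ i g U z‖) U :=
    continuousOn_finsetSum _ fun i _ =>
      (hg.continuousOn_iteratedFDerivWithin ENat.LEInfty.out hU.uniqueDiffOn).norm
  obtain ⟨C, hC⟩ := hK.exists_bound_of_continuousOn (hcont.mono hKU)
  refine ⟨C, fun z hz i hi => le_trans ?_ ((le_abs_self _).trans (hC z hz))⟩
  exact Finset.single_le_sum (f := fun i => ‖iteratedFDerivWithin ℝ i g U z‖)
    (fun _ _ => norm_nonneg _) (Finset.mem_range_succ_iff.mpr hi)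

theorem IsSymbol.comp_of_isCompact {Φ : E → G} {g : G → F} {U K : Set G} (hΦ : IsSymbol Φ 0)
    (hg : ContDiffOn ℝ ∞ g U) (hU : IsOpen U) (hK : IsCompact K) (hKU : K ⊆ U)
    (hΦU : MapsTo Φ {0}ᶜ U) (hΦK : ∀ᶠ ξ in cobounded E, Φ ξ ∈ K) : IsSymbol (g ∘ Φ) 0 where
  contDiffOn := hg.comp hΦ.contDiffOn hΦU
  isBigO n := by
    obtain ⟨C, hC⟩ := hK.exists_bound_iteratedFDerivWithin hg hU hKU n
    obtain ⟨B, hB⟩ := hΦ.eventually_norm_iteratedFDeriv_le n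
    set B' := max B 1
    refine IsBigO.of_bound (n.factorial * C * B' ^ n) ?_
    filter_upwards [hB, hΦK, eventually_ne_cobounded 0] with ξ hBξ hKξ hξ
    have hpow (i : ℕ) : ‖ξ‖ ^ ((0 : ℝ) - i) = ‖ξ‖⁻¹ ^ i := by
      rw [zero_sub, Real.rpow_neg (norm_nonneg ξ), Real.rpow_natCast, inv_pow]
    have hFaa := norm_iteratedFDerivWithin_comp_le hg hΦ.contDiffOn ENat.LEInfty.out
      hU.uniqueDiffOn isOpen_compl_singleton.uniqueDiffOn hΦU hξ (C := C) (D := B' * ‖ξ‖⁻¹)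
      (fun i hi => hC _ hKξ i hi) (fun i hi hin => by
        rw [iteratedFDerivWithin_compl_zero hξ, mul_pow]
        refine (hBξ i hin).trans ?_
        rw [hpow]
        gcongr
        exact (le_max_left _ _).trans (le_self_pow₀ (le_max_right _ _) (by omega)))
    rw [iteratedFDerivWithin_compl_zero hξ] at hFaa
    rw [Real.norm_of_nonneg (by positivity), hpow]
    exact hFaa.trans_eq (by ring)

lemma IsPosHomogeneous.norm_iteratedFDeriv_smul_le {f : E → F} {d : ℝ}
    (hf : IsPosHomogeneous f d) (hsmooth : ContDiffOn ℝ ∞ f {0}ᶜ) {c : ℝ} (hc : 0 < c) {x : E}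
    (hx : x ≠ 0) (i : ℕ) :
    ‖iteratedFDeriv ℝ i f (c • x)‖ ≤ c ^ (d - i) * ‖iteratedFDeriv ℝ i f x‖ := by
  set L : E →L[ℝ] E := c⁻¹ • ContinuousLinearMap.id ℝ E
  have hLx : L (c • x) = x := by simp [L, smul_smul, mul_inv_cancel₀ hc.ne']
  have hfL : f = fun y => c ^ d • (f ∘ L) y := by
    funext y
    simp only [Function.comp_apply, L, FunLike.coe_smul,
      Pi.smul_apply, ContinuousLinearMap.id_apply]
    rw [← hf hc, smul_smul, mul_inv_cancel₀ hc.ne', one_smul]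
  have hpre : IsOpen (L ⁻¹' {0}ᶜ) := isOpen_compl_singleton.preimage L.continuous
  have hmem : c • x ∈ L ⁻¹' {0}ᶜ := by simpa [hLx] using hx
  have hcomp : ContDiffAt ℝ i (f ∘ L) (c • x) :=
    ((hsmooth.contDiffAt (isOpen_compl_singleton.mem_nhds hmem)).comp _
      L.contDiff.contDiffAt).of_le ENat.LEInfty.out
  have hL : ‖L‖ ≤ c⁻¹ := by
    refine ContinuousLinearMap.opNorm_le_bound _ (by positivity) fun y => ?_
    simp [L, norm_smul, abs_of_pos hc]
  calc ‖iteratedFDeriv ℝ i f (c • x)‖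
      = c ^ d * ‖(iteratedFDeriv ℝ i f x).compContinuousLinearMap fun _ => L‖ := by
        conv_lhs => rw [hfL]
        rw [iteratedFDeriv_const_smul_apply' hcomp, norm_smul, Real.norm_of_nonneg (by positivity),
          ← iteratedFDerivWithin_of_isOpen i hpre hmem,
          L.iteratedFDerivWithin_comp_right hsmooth isOpen_compl_singleton.uniqueDiffOn
            hpre.uniqueDiffOn hmem ENat.LEInfty.out, hLx, iteratedFDerivWithin_compl_zero hx]
    _ ≤ c ^ d * (‖iteratedFDeriv ℝ i f x‖ * c⁻¹ ^ i) := by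
        gcongr
        refine (ContinuousMultilinearMap.norm_compContinuousLinearMap_le _ _).trans ?_
        gcongr
        rw [Finset.prod_const, Finset.card_univ, Fintype.card_fin]
        exact pow_le_pow_left₀ (norm_nonneg _) hL i
    _ = c ^ (d - i) * ‖iteratedFDeriv ℝ i f x‖ := by
        rw [Real.rpow_sub hc, Real.rpow_natCast, inv_pow]; ring

theorem IsPosHomogeneous.isSymbol [FiniteDimensional ℝ E] {f : E → F} {d : ℝ}
    (hf : IsPosHomogeneous f d) (hsmooth : ContDiffOn ℝ ∞ f {0}ᶜ) : IsSymbol f d where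
  contDiffOn := hsmooth
  isBigO i := by
    have hsphere : Metric.sphere (0 : E) 1 ⊆ {0}ᶜ := fun y hy =>
      ne_zero_of_mem_unit_sphere ⟨y, hy⟩
    have hcont : ContinuousOn (iteratedFDeriv ℝ i f) {0}ᶜ :=
      (hsmooth.continuousOn_iteratedFDerivWithin ENat.LEInfty.out
        isOpen_compl_singleton.uniqueDiffOn).congr fun y hy =>
          (iteratedFDerivWithin_compl_zero hy i).symm
    obtain ⟨B, hB⟩ := (isCompact_sphere (0 : E) 1).exists_bound_of_continuousOn
      (hcont.mono hsphere)
    refine IsBigO.of_bound B ?_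
    filter_upwards [eventually_ne_cobounded 0] with ξ hξ
    have hr : 0 < ‖ξ‖ := norm_pos_iff.mpr hξ
    have hunit : ‖ξ‖⁻¹ • ξ ∈ Metric.sphere (0 : E) 1 := by
      simp [norm_smul, inv_mul_cancel₀ hr.ne']
    have hsplit : ξ = ‖ξ‖ • (‖ξ‖⁻¹ • ξ) := by rw [smul_smul, mul_inv_cancel₀ hr.ne', one_smul]
    rw [Real.norm_of_nonneg (by positivity)]
    calc ‖iteratedFDeriv ℝ i f ξ‖
        ≤ ‖ξ‖ ^ (d - i) * ‖iteratedFDeriv ℝ i f (‖ξ‖⁻¹ • ξ)‖ := by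
          conv_lhs => rw [hsplit]
          exact hf.norm_iteratedFDeriv_smul_le hsmooth hr (hsphere hunit) i
      _ ≤ ‖ξ‖ ^ (d - i) * B := by gcongr; exact hB _ hunit
      _ = B * ‖ξ‖ ^ (d - i) := mul_comm _ _

end Symbol

section InversePolar

variable {E : Type*} [NormedAddCommGroup E] [InnerProductSpace ℝ E]

def inversePolar (ξ : E) : ℝ × E := (‖ξ‖⁻¹, ‖ξ‖⁻¹ • ξ)

lemma contDiffOn_norm_inv : ContDiffOn ℝ ∞ (fun ξ : E => ‖ξ‖⁻¹) {0}ᶜ := fun _ hξ =>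
  ((contDiffAt_norm ℝ hξ).inv (norm_ne_zero_iff.mpr hξ)).contDiffWithinAt

lemma eventually_inversePolar_mem :
    ∀ᶠ ξ in cobounded E, inversePolar ξ ∈ Icc (0 : ℝ) 1 ×ˢ Metric.sphere (0 : E) 1 := by
  filter_upwards [eventually_cobounded_le_norm 1] with ξ hξ
  have hr : 0 < ‖ξ‖ := one_pos.trans_le hξ
  refine ⟨⟨inv_nonneg.mpr (norm_nonneg ξ), inv_le_one_of_one_le₀ hξ⟩, ?_⟩
  simp [inversePolar, norm_smul, inv_mul_cancel₀ hr.ne']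

variable [FiniteDimensional ℝ E]

lemma isSymbol_norm_pow (j : ℕ) : IsSymbol (fun ξ : E => ‖ξ‖ ^ j) j := by
  refine IsPosHomogeneous.isSymbol (fun c hc y => ?_) fun _ hξ =>
    ((contDiffAt_norm ℝ hξ).pow j).contDiffWithinAt
  rw [norm_smul, Real.norm_of_nonneg hc.le, mul_pow, Real.rpow_natCast, smul_eq_mul]

lemma isSymbol_inversePolar : IsSymbol (inversePolar (E := E)) 0 := by
  have hinv : IsSymbol (fun ξ : E => ‖ξ‖⁻¹) (-1) := by
    refine IsPosHomogeneous.isSymbol (fun c hc y => ?_) contDiffOn_norm_inv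
    rw [norm_smul, Real.norm_of_nonneg hc.le, mul_inv, Real.rpow_neg_one, smul_eq_mul]
  have hdir : IsSymbol (fun ξ : E => ‖ξ‖⁻¹ • ξ) 0 := by
    refine IsPosHomogeneous.isSymbol (fun c hc y => ?_) (contDiffOn_norm_inv.smul contDiffOn_id)
    rw [norm_smul, Real.norm_of_nonneg hc.le, Real.rpow_zero, one_smul, smul_smul]
    congr 1
    field_simp
  exact (hinv.mono (by norm_num)).prodMk hdir

end InversePolar

section Polynomial

variable {n : ℕ}

lemma contDiff_polyEval (q : MvPolynomial (Fin n) ℝ) : ContDiff ℝ ∞ (polyEval q) :=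
  (AnalyticOnNhd.eval_continuousLinearMap' (𝕜 := ℝ)
    (fun i => EuclideanSpace.proj (𝕜 := ℝ) (ι := Fin n) i) q).contDiff

lemma polyEval_smul_of_isHomogeneous {q : MvPolynomial (Fin n) ℝ} {j : ℕ} (hq : q.IsHomogeneous j)
    (c : ℝ) (ξ : EuclideanSpace ℝ (Fin n)) : polyEval q (c • ξ) = c ^ j * polyEval q ξ := by
  simp only [polyEval, PiLp.smul_apply, smul_eq_mul, eval_eq', Finset.mul_sum]
  refine Finset.sum_congr rfl fun d hd => ?_
  have hdeg : ∑ i, d i = j := by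
    rw [← hq (mem_support_iff.mp hd), Finsupp.weight_apply, Finsupp.sum_fintype _ _ (by simp)]
    simp
  rw [← hdeg, ← Finset.prod_pow_eq_pow_sum, mul_left_comm, ← Finset.prod_mul_distrib]
  simp only [mul_pow]

variable (p : MvPolynomial (Fin n) ℝ) (m : ℕ)

/-- `t ^ k * p_{≤ k} (ω / t)` as a polynomial in `(t, ω)`, where `p_{≤ k}` is the part of `p` of
degree at most `k`. -/
def homogenizedEval (k : ℕ) (z : ℝ × EuclideanSpace ℝ (Fin n)) : ℝ :=
  ∑ j ∈ Finset.range (k + 1), z.1 ^ (k - j) * polyEval (homogeneousComponent j p) z.2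

def rationalizedSqrtDiff (z : ℝ × EuclideanSpace ℝ (Fin n)) : ℝ :=
  homogenizedEval p (m - 1) z /
    (√(homogenizedEval p m z) + √(polyEval (homogeneousComponent m p) z.2))

def positivityDomain : Set (ℝ × EuclideanSpace ℝ (Fin n)) :=
  {z | 0 < homogenizedEval p m z ∧ 0 < polyEval (homogeneousComponent m p) z.2}

variable {p m}

lemma homogenizedEval_smul (k : ℕ) (t : ℝ) (ξ : EuclideanSpace ℝ (Fin n)) :
    homogenizedEval p k (t, t • ξ) =
      t ^ k * ∑ j ∈ Finset.range (k + 1), polyEval (homogeneousComponent j p) ξ := by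
  rw [homogenizedEval, Finset.mul_sum]
  refine Finset.sum_congr rfl fun j hj => ?_
  rw [polyEval_smul_of_isHomogeneous (homogeneousComponent_isHomogeneous j p), ← mul_assoc,
    ← pow_add, Nat.sub_add_cancel (Finset.mem_range_succ_iff.mp hj)]

lemma homogenizedEval_zero_fst (k : ℕ) (y : EuclideanSpace ℝ (Fin n)) :
    homogenizedEval p k (0, y) = polyEval (homogeneousComponent k p) y := by
  rw [homogenizedEval, Finset.sum_eq_single_of_mem k (Finset.self_mem_range_succ k)]
  · simp
  · intro j hj hjk
    simp [Nat.sub_ne_zero_of_lt (lt_of_le_of_ne (Finset.mem_range_succ_iff.mp hj) hjk)]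

lemma sum_polyEval_homogeneousComponent (hdeg : p.totalDegree = m) (ξ : EuclideanSpace ℝ (Fin n)) :
    ∑ j ∈ Finset.range (m + 1), polyEval (homogeneousComponent j p) ξ = polyEval p ξ := by
  conv_rhs => rw [← sum_homogeneousComponent p, hdeg]
  simp [polyEval]

lemma contDiff_homogenizedEval (k : ℕ) : ContDiff ℝ ∞ (homogenizedEval p k) :=
  ContDiff.sum fun _ _ => (contDiff_fst.pow _).mul ((contDiff_polyEval _).comp contDiff_snd)

lemma isOpen_positivityDomain : IsOpen (positivityDomain p m) :=
  (isOpen_lt continuous_const (contDiff_homogenizedEval m).continuous).inter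
    (isOpen_lt continuous_const ((contDiff_polyEval _).continuous.comp continuous_snd))

lemma contDiffOn_rationalizedSqrtDiff :
    ContDiffOn ℝ ∞ (rationalizedSqrtDiff p m) (positivityDomain p m) := by
  have hden : ContDiffOn ℝ ∞ (fun z : ℝ × EuclideanSpace ℝ (Fin n) =>
      √(homogenizedEval p m z) + √(polyEval (homogeneousComponent m p) z.2))
      (positivityDomain p m) := fun z hz =>
    (((contDiffAt_sqrt hz.1.ne').comp z (contDiff_homogenizedEval m).contDiffAt).add
      ((contDiffAt_sqrt hz.2.ne').comp z
        ((contDiff_polyEval _).comp contDiff_snd).contDiffAt)).contDiffWithinAt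
  exact (contDiff_homogenizedEval _).contDiffOn.div hden fun z hz =>
    (add_pos_of_pos_of_nonneg (Real.sqrt_pos.mpr hz.1) (Real.sqrt_nonneg _)).ne'

lemma inversePolar_mapsTo_positivityDomain (hdeg : p.totalDegree = m)
    (hpos : ∀ ξ, 0 < polyEval p ξ)
    (hell : ∀ ξ, ξ ≠ 0 → 0 < polyEval (homogeneousComponent m p) ξ) :
    MapsTo (inversePolar (E := EuclideanSpace ℝ (Fin n))) {0}ᶜ (positivityDomain p m) := by
  intro ξ hξ
  have ht : 0 < ‖ξ‖⁻¹ := inv_pos.mpr (norm_pos_iff.mpr hξ)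
  refine ⟨?_, ?_⟩
  · rw [inversePolar, homogenizedEval_smul, sum_polyEval_homogeneousComponent hdeg]
    exact mul_pos (pow_pos ht m) (hpos ξ)
  · rw [inversePolar, polyEval_smul_of_isHomogeneous (homogeneousComponent_isHomogeneous m p)]
    exact mul_pos (pow_pos ht m) (hell ξ hξ)

lemma Icc_prod_sphere_subset_positivityDomain (hdeg : p.totalDegree = m)
    (hpos : ∀ ξ, 0 < polyEval p ξ)
    (hell : ∀ ξ, ξ ≠ 0 → 0 < polyEval (homogeneousComponent m p) ξ) :
    Icc (0 : ℝ) 1 ×ˢ Metric.sphere 0 1 ⊆ positivityDomain p m := by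
  rintro ⟨t, y⟩ ⟨⟨ht, -⟩, hy⟩
  have hy0 : y ≠ 0 := ne_zero_of_mem_unit_sphere ⟨y, hy⟩
  refine ⟨?_, hell y hy0⟩
  rcases ht.eq_or_lt with rfl | ht
  · simpa only [homogenizedEval_zero_fst] using hell y hy0
  · have hty : y = t • (t⁻¹ • y) := by rw [smul_smul, mul_inv_cancel₀ ht.ne', one_smul]
    rw [hty, homogenizedEval_smul, sum_polyEval_homogeneousComponent hdeg]
    exact mul_pos (pow_pos ht m) (hpos _)

lemma sqrt_sub_sqrt_eq_norm_pow_mul (hdeg : p.totalDegree = m) {h : ℕ} (hmh : m = h + h)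
    (hh : 1 ≤ h) (hpos : ∀ ξ, 0 < polyEval p ξ)
    (hell : ∀ ξ, ξ ≠ 0 → 0 < polyEval (homogeneousComponent m p) ξ)
    {ξ : EuclideanSpace ℝ (Fin n)} (hξ : ξ ≠ 0) :
    √(polyEval p ξ) - √(polyEval (homogeneousComponent m p) ξ) =
      ‖ξ‖ ^ (h - 1) * rationalizedSqrtDiff p m (inversePolar ξ) := by
  set t := ‖ξ‖⁻¹
  have ht : 0 < t := inv_pos.mpr (norm_pos_iff.mpr hξ)
  set A := √(polyEval p ξ)
  set B := √(polyEval (homogeneousComponent m p) ξ)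
  have hAB : 0 < A + B := add_pos_of_pos_of_nonneg (Real.sqrt_pos.mpr (hpos ξ)) (Real.sqrt_nonneg _)
  have hsqrt (x : ℝ) : √(t ^ m * x) = t ^ h * √x := by
    rw [hmh, pow_add, Real.sqrt_mul (by positivity), Real.sqrt_mul_self (by positivity)]
  have hdiff : ∑ j ∈ Finset.range (m - 1 + 1), polyEval (homogeneousComponent j p) ξ =
      (A - B) * (A + B) := by
    have hsum := sum_polyEval_homogeneousComponent hdeg ξ
    rw [Finset.sum_range_succ] at hsum
    rw [Nat.sub_add_cancel (by omega : 1 ≤ m), mul_comm, ← mul_self_sub_mul_self,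
      Real.mul_self_sqrt (hpos ξ).le, Real.mul_self_sqrt (hell ξ hξ).le]
    linarith
  have hnum : homogenizedEval p (m - 1) (inversePolar ξ) =
      t ^ (h - 1) * t ^ h * ((A - B) * (A + B)) := by
    rw [inversePolar, homogenizedEval_smul, hdiff, ← pow_add]
    congr 2; omega
  have hden : √(homogenizedEval p m (inversePolar ξ)) +
      √(polyEval (homogeneousComponent m p) (inversePolar ξ).2) = t ^ h * (A + B) := by
    rw [inversePolar, homogenizedEval_smul, sum_polyEval_homogeneousComponent hdeg,
      polyEval_smul_of_isHomogeneous (homogeneousComponent_isHomogeneous m p), hsqrt, hsqrt,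
      mul_add]
  rw [rationalizedSqrtDiff, hnum, hden]
  field_simp
  rw [mul_assoc, ← mul_pow, mul_inv_cancel₀ (norm_ne_zero_iff.mpr hξ), one_pow, mul_one]

end Polynomial

theorem sqrt_diff_symbol_estimate_general (n m : ℕ) (hm4 : 4 ≤ m) (hmeven : Even m)
    (p : MvPolynomial (Fin n) ℝ) (hdeg : p.totalDegree = m)
    (hpos : ∀ ξ : EuclideanSpace ℝ (Fin n), 0 < polyEval p ξ)
    (hell : ∀ ξ : EuclideanSpace ℝ (Fin n), ξ ≠ 0 →
        0 < polyEval (MvPolynomial.homogeneousComponent m p) ξ) :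
    ∀ k : ℕ, ∃ C : ℝ, 0 < C ∧ ∃ R : ℝ, 1 ≤ R ∧
      ∀ ξ : EuclideanSpace ℝ (Fin n), R ≤ ‖ξ‖ →
        ‖iteratedFDeriv ℝ k
            (fun ξ' => Real.sqrt (polyEval p ξ') -
              Real.sqrt (polyEval (MvPolynomial.homogeneousComponent m p) ξ')) ξ‖
          ≤ C * ‖ξ‖ ^ ((m : ℝ) / 2 - 1 - k) := by
  obtain ⟨h, rfl⟩ := hmeven
  have hh : 1 ≤ h := by omega
  have hsymbol := (isSymbol_norm_pow (E := EuclideanSpace ℝ (Fin n)) (h - 1)).mul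
    (isSymbol_inversePolar.comp_of_isCompact contDiffOn_rationalizedSqrtDiff
      isOpen_positivityDomain (isCompact_Icc.prod (isCompact_sphere 0 1))
      (Icc_prod_sphere_subset_positivityDomain hdeg hpos hell)
      (inversePolar_mapsTo_positivityDomain hdeg hpos hell) eventually_inversePolar_mem)
  have horder : ((h - 1 : ℕ) : ℝ) + 0 = ((h + h : ℕ) : ℝ) / 2 - 1 := by
    push_cast [Nat.cast_sub hh]
    ring
  rw [horder] at hsymbol
  exact (hsymbol.congr fun ξ hξ =>
    (sqrt_sub_sqrt_eq_norm_pow_mul hdeg rfl hh hpos hell hξ).symm).exists_bound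

/-- The function `a(ξ) = P(ξ)^{1/2} - P_m(ξ)^{1/2}` is a symbol of order `m/2 - 1` at
infinity: each `k`-th derivative is bounded by `C |ξ|^{m/2 - 1 - k}` for large `|ξ|`. -/
theorem sqrt_diff_symbol_estimate (n m : ℕ) (hn : 2 ≤ n) (hm4 : 4 ≤ m) (hmeven : Even m)
    (p : MvPolynomial (Fin n) ℝ) (hdeg : p.totalDegree = m)
    (hpos : ∀ ξ : EuclideanSpace ℝ (Fin n), 0 < polyEval p ξ)
    (hell : ∀ ξ : EuclideanSpace ℝ (Fin n), ξ ≠ 0 →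
        0 < polyEval (MvPolynomial.homogeneousComponent m p) ξ) :
    ∀ k : ℕ, ∃ C : ℝ, 0 < C ∧ ∃ R : ℝ, 1 ≤ R ∧
      ∀ ξ : EuclideanSpace ℝ (Fin n), R ≤ ‖ξ‖ →
        ‖iteratedFDeriv ℝ k
            (fun ξ' => Real.sqrt (polyEval p ξ') -
              Real.sqrt (polyEval (MvPolynomial.homogeneousComponent m p) ξ')) ξ‖
          ≤ C * ‖ξ‖ ^ ((m : ℝ) / 2 - 1 - k) :=
  sqrt_diff_symbol_estimate_general n m hm4 hmeven p hdeg hpos hell
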